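/- arXiv:2311.04618 — 4 statements merged into one kernel-verified Lean document; each statement's English description precedes it below -/
import Mathlib

section
/- Let μ be an exponent-type measure on ℝ^d, ‖·‖ a norm on ℝ^d, and X a random vector in [0,∞)^d regularly varying with limit measure μ. For nonempty J ⊆ D and ε > 0 define the thickened rectangle R^ε_{n,J} = {x ∈ [0,∞)^d : ‖x‖ > n, x_j > nε for all j ∈ J, and x_j ≤ nε for all j ∈ D \ J}. Then for every ε > 0 the limit lim_{n→∞} n P[X ∈ R^ε_{n,J}] exists and equals μ(R^ε_{1,J}), and lim_{ε↓0} lim_{n→∞} n P[X ∈ R^ε_{n,J}] = μ({x ∈ E_J : ‖x‖ > 1}). -/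
open MeasureTheory Filter

/-- The set `E_J = {x ∈ [0,∞)^d \ {0} : x_j > 0 iff j ∈ J}`. -/
def EJ {d : ℕ} (J : Finset (Fin d)) : Set (Fin d → ℝ) :=
  {x | (∀ j, 0 ≤ x j) ∧ x ≠ 0 ∧ ∀ j, (0 < x j ↔ j ∈ J)}

/-- An exponent-type measure on `ℝ^d`. -/
structure IsExponentMeasure {d : ℕ} (μ : Measure (Fin d → ℝ)) : Prop where
  concentrated : μ {x | ¬ ((∀ j, 0 ≤ x j) ∧ x ≠ 0)} = 0
  homog : ∀ c : ℝ, 0 < c → ∀ B : Set (Fin d → ℝ), MeasurableSet B →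
    μ ((c • ·) '' B) = (ENNReal.ofReal c)⁻¹ * μ B
  finite_away : ∀ B : Set (Fin d → ℝ), (0 : Fin d → ℝ) ∉ closure B → μ B < ⊤

/-- `N` is a norm on `ℝ^d`. -/
structure IsNorm {d : ℕ} (N : (Fin d → ℝ) → ℝ) : Prop where
  nonneg : ∀ x, 0 ≤ N x
  eq_zero_iff : ∀ x, N x = 0 ↔ x = 0
  triangle : ∀ x y, N (x + y) ≤ N x + N y
  smul : ∀ (c : ℝ) (x), N (c • x) = |c| * N x

/-- `X` is regularly varying with limit measure `μ`: `n P[X ∈ nB] → μ(B)` for every Borel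
`B` bounded away from the origin with `μ(∂B) = 0`. -/
def RegularlyVarying {d : ℕ} {Ω : Type*} [MeasurableSpace Ω] (P : Measure Ω)
    (X : Ω → Fin d → ℝ) (μ : Measure (Fin d → ℝ)) : Prop :=
  ∀ B : Set (Fin d → ℝ), MeasurableSet B → (0 : Fin d → ℝ) ∉ closure B →
    μ (frontier B) = 0 →
    Tendsto (fun n : ℕ => (n : ℝ) * (P {ω | (fun j => X ω j / n) ∈ B}).toReal)
      atTop (nhds (μ B).toReal)

/-- The thickened rectangle `R^ε_{t,J}`. -/
def thickRect {d : ℕ} (N : (Fin d → ℝ) → ℝ) (J : Finset (Fin d)) (ε t : ℝ) :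
    Set (Fin d → ℝ) :=
  {x | (∀ j, 0 ≤ x j) ∧ t < N x ∧ (∀ j ∈ J, t * ε < x j) ∧ ∀ j ∉ J, x j ≤ t * ε}

lemma isNorm_zero {d : ℕ} {N : (Fin d → ℝ) → ℝ} (hN : IsNorm N) : N 0 = 0 :=
  (hN.eq_zero_iff 0).2 rfl

lemma isNorm_continuous {d : ℕ} {N : (Fin d → ℝ) → ℝ} (hN : IsNorm N) :
    Continuous N := by
  classical
  have hsum : ∀ (s : Finset (Fin d)) (f : Fin d → (Fin d → ℝ)),
      N (∑ i ∈ s, f i) ≤ ∑ i ∈ s, N (f i) := by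
    intro s f
    induction s using Finset.cons_induction with
    | empty => simp [isNorm_zero hN]
    | cons a s ha ih =>
      rw [Finset.sum_cons, Finset.sum_cons]
      exact (hN.triangle _ _).trans (by linarith)
  set C : ℝ := ∑ i : Fin d, N (fun j => if i = j then 1 else 0) with hC
  have hC0 : 0 ≤ C := Finset.sum_nonneg fun i _ => hN.nonneg _
  have hbound : ∀ z : Fin d → ℝ, N z ≤ C * ‖z‖ := by
    intro z
    calc N z = N (∑ i, (z i) • fun j => if i = j then (1:ℝ) else 0) := by
          rw [← pi_eq_sum_univ]
      _ ≤ ∑ i, N ((z i) • fun j => if i = j then (1:ℝ) else 0) := hsum _ _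
      _ = ∑ i, |z i| * N (fun j => if i = j then (1:ℝ) else 0) := by
          simp [hN.smul]
      _ ≤ ∑ i, ‖z‖ * N (fun j => if i = j then (1:ℝ) else 0) := by
          refine Finset.sum_le_sum fun i _ => ?_
          exact mul_le_mul_of_nonneg_right (by simpa using norm_le_pi_norm z i) (hN.nonneg _)
      _ = C * ‖z‖ := by rw [← Finset.mul_sum, mul_comm]
  have hdist : ∀ x y : Fin d → ℝ, dist (N x) (N y) ≤ C * dist x y := by
    intro x y
    rw [Real.dist_eq, dist_eq_norm]
    have h1 : N x - N y ≤ N (x - y) := by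
      have := hN.triangle (x - y) y
      simp only [sub_add_cancel] at this
      linarith
    have hneg : N (y - x) = N (x - y) := by
      have := hN.smul (-1) (x - y)
      simpa [neg_sub] using this
    have h2 : N y - N x ≤ N (x - y) := by
      have := hN.triangle (y - x) x
      simp only [sub_add_cancel] at this
      linarith
    have habs : |N x - N y| ≤ N (x - y) := abs_sub_le_iff.2 ⟨by linarith, by linarith⟩
    exact habs.trans (hbound _)
  refine (LipschitzWith.of_dist_le_mul (K := C.toNNReal) ?_).continuous
  intro x y
  simpa [Real.coe_toNNReal C hC0] using hdist x y

lemma level_null {d : ℕ} {μ : Measure (Fin d → ℝ)} (hμ : IsExponentMeasure μ)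
    (g : (Fin d → ℝ) → ℝ) (hg : Continuous g)
    (hhom : ∀ c : ℝ, 0 < c → ∀ x, g (c • x) = c * g x)
    {a : ℝ} (ha : 0 < a) : μ {x | g x = a} = 0 := by
  have g0 : g 0 = 0 := by
    have h := hhom 2 two_pos 0
    rw [smul_zero] at h
    linarith
  set m := μ {x | g x = a} with hm
  have hmeas : ∀ b : ℝ, MeasurableSet {x : Fin d → ℝ | g x = b} := fun b =>
    hg.measurable (measurableSet_singleton b)
  have key : ∀ c : ℝ, 0 < c → μ {x | g x = c * a} = (ENNReal.ofReal c)⁻¹ * m := by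
    intro c hc
    have himg : (c • ·) '' {x | g x = a} = {x | g x = c * a} := by
      ext x
      constructor
      · rintro ⟨y, hy, rfl⟩
        simp only [Set.mem_setOf_eq] at hy ⊢
        rw [hhom c hc y, hy]
      · intro hx
        refine ⟨c⁻¹ • x, ?_, by simp [smul_smul, mul_inv_cancel₀ hc.ne']⟩
        simp only [Set.mem_setOf_eq] at hx ⊢
        rw [hhom c⁻¹ (inv_pos.2 hc) x, hx, inv_mul_cancel_left₀ hc.ne']
    rw [← himg, hμ.homog c hc _ (hmeas a)]
  set cs : ℕ → ℝ := fun k => 1 + (1/2) ^ (k + 1) with hcs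
  have hc1 : ∀ k, 1 < cs k := fun k => by
    have : (0:ℝ) < (1/2) ^ (k+1) := by positivity
    simp only [hcs]; linarith
  have hc2 : ∀ k, cs k ≤ 2 := fun k => by
    have : ((1:ℝ)/2) ^ (k+1) ≤ (1/2) ^ 1 :=
      pow_le_pow_of_le_one (by norm_num) (by norm_num) (Nat.le_add_left 1 k)
    simp only [hcs]
    norm_num at this ⊢
    linarith
  have hsa : StrictAnti (fun n : ℕ => ((1:ℝ)/2) ^ n) := fun p q h =>
    pow_lt_pow_right_of_lt_one₀ (by norm_num) (by norm_num) h
  have hinj : Function.Injective cs := by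
    intro k l hkl
    simp only [hcs, add_right_inj] at hkl
    exact Nat.succ_injective (hsa.injective hkl)
  set A : ℕ → Set (Fin d → ℝ) := fun k => {x | g x = cs k * a} with hA
  have hdisj : Pairwise (Function.onFun Disjoint A) := by
    intro k l hkl
    refine Set.disjoint_left.2 fun x hxk hxl => ?_
    simp only [hA, Set.mem_setOf_eq] at hxk hxl
    exact hkl (hinj (mul_right_cancel₀ ha.ne' (hxk ▸ hxl)))
  have hsub : (⋃ k, A k) ⊆ {x | a ≤ g x ∧ g x ≤ 2 * a} := by
    rintro x ⟨s, ⟨k, rfl⟩, hx⟩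
    simp only [hA, Set.mem_setOf_eq] at hx
    constructor
    · rw [hx]; nlinarith [hc1 k]
    · rw [hx]; nlinarith [hc2 k]
  have hfin : μ {x | a ≤ g x ∧ g x ≤ 2 * a} < ⊤ := by
    apply hμ.finite_away
    intro h0
    have hclosed : IsClosed {x : Fin d → ℝ | a ≤ g x} := isClosed_le continuous_const hg
    have hsub2 : closure {x : Fin d → ℝ | a ≤ g x ∧ g x ≤ 2 * a} ⊆ {x | a ≤ g x} :=
      closure_minimal (fun x hx => hx.1) hclosed
    have := hsub2 h0
    simp only [Set.mem_setOf_eq, g0] at this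
    linarith
  by_contra hm0
  have hμA : ∀ k, (ENNReal.ofReal 2)⁻¹ * m ≤ μ (A k) := by
    intro k
    rw [hA]
    simp only
    rw [key (cs k) (lt_trans one_pos (hc1 k))]
    gcongr
    exact hc2 k
  have hne : (ENNReal.ofReal 2)⁻¹ * m ≠ 0 :=
    mul_ne_zero (ENNReal.inv_ne_zero.2 ENNReal.ofReal_ne_top) hm0
  have htop : (⊤ : ENNReal) ≤ μ (⋃ k, A k) := by
    rw [measure_iUnion hdisj (fun k => hmeas _)]
    calc (⊤ : ENNReal) = ∑' _ : ℕ, (ENNReal.ofReal 2)⁻¹ * m :=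
          (ENNReal.tsum_const_eq_top_of_ne_zero hne).symm
      _ ≤ ∑' k, μ (A k) := ENNReal.tsum_le_tsum hμA
  exact absurd (lt_of_le_of_lt (le_trans htop (measure_mono hsub)) hfin) (by simp)

lemma finite_gt {d : ℕ} {μ : Measure (Fin d → ℝ)} (hμ : IsExponentMeasure μ)
    {N : (Fin d → ℝ) → ℝ} (hN : IsNorm N) {t : ℝ} (ht : 0 < t) :
    μ {x | t < N x} < ⊤ := by
  have hss : {x : Fin d → ℝ | t < N x} ⊆ {x | t ≤ N x} := Set.setOf_subset_setOf.2 fun x hx => le_of_lt hx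
  refine lt_of_le_of_lt (measure_mono hss) (hμ.finite_away {x | t ≤ N x} ?_)
  rw [(isClosed_le continuous_const (isNorm_continuous hN)).closure_eq]
  simp only [Set.mem_setOf_eq, isNorm_zero hN]
  linarith

/-- for every `ε > 0`, `n P[X ∈ R^ε_{n,J}] → μ(R^ε_{1,J})`, and
`μ(R^ε_{1,J}) → μ({x ∈ E_J : ‖x‖ > 1})` as `ε ↓ 0`. -/
theorem thickened_rectangles_limit {d : ℕ} (hd : 0 < d)
    (μ : Measure (Fin d → ℝ)) (hμ : IsExponentMeasure μ)
    (N : (Fin d → ℝ) → ℝ) (hN : IsNorm N)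
    {Ω : Type*} [MeasurableSpace Ω] (P : Measure Ω) [IsProbabilityMeasure P]
    (X : Ω → Fin d → ℝ) (hXmeas : Measurable X) (hXpos : ∀ ω j, 0 ≤ X ω j)
    (hRV : RegularlyVarying P X μ)
    (J : Finset (Fin d)) (hJ : J.Nonempty) :
    (∀ ε : ℝ, 0 < ε →
      Tendsto (fun n : ℕ => (n : ℝ) * (P {ω | X ω ∈ thickRect N J ε n}).toReal)
        atTop (nhds (μ (thickRect N J ε 1)).toReal)) ∧
    Tendsto (fun ε : ℝ => (μ (thickRect N J ε 1)).toReal)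
      (nhdsWithin 0 (Set.Ioi 0)) (nhds (μ {x ∈ EJ J | 1 < N x}).toReal) := by
  classical
  have hNc := isNorm_continuous hN
  have hNmeas := hNc.measurable
  have hNhom : ∀ c : ℝ, 0 < c → ∀ x, N (c • x) = c * N x := fun c hc x => by
    rw [hN.smul, abs_of_pos hc]
  constructor
  · -- PART 1
    intro ε hε
    have hεpos : 0 < 1 * ε := by linarith
    set B : Set (Fin d → ℝ) :=
      {x | 1 < N x ∧ (∀ j ∈ J, 1 * ε < x j) ∧ ∀ j ∉ J, x j ≤ 1 * ε} with hB
    have hBmeas : MeasurableSet B := by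
      have h1 : MeasurableSet {x : Fin d → ℝ | 1 < N x} :=
        measurableSet_lt measurable_const hNmeas
      have h2 : MeasurableSet {x : Fin d → ℝ | ∀ j ∈ J, 1 * ε < x j} := by
        have he : {x : Fin d → ℝ | ∀ j ∈ J, 1 * ε < x j}
            = ⋂ j, ⋂ (_ : j ∈ J), {x : Fin d → ℝ | 1 * ε < x j} := by
          ext x; simp [Set.mem_iInter]
        rw [he]
        exact MeasurableSet.iInter fun j => MeasurableSet.iInter fun _ =>
          measurableSet_lt measurable_const (measurable_pi_apply j)
      have h3 : MeasurableSet {x : Fin d → ℝ | ∀ j ∉ J, x j ≤ 1 * ε} := by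
        have he : {x : Fin d → ℝ | ∀ j ∉ J, x j ≤ 1 * ε}
            = ⋂ j, ⋂ (_ : j ∉ J), {x : Fin d → ℝ | x j ≤ 1 * ε} := by
          ext x; simp [Set.mem_iInter]
        rw [he]
        exact MeasurableSet.iInter fun j => MeasurableSet.iInter fun _ =>
          measurableSet_le (measurable_pi_apply j) measurable_const
      have he : B = {x : Fin d → ℝ | 1 < N x} ∩
          ({x : Fin d → ℝ | ∀ j ∈ J, 1 * ε < x j} ∩ {x : Fin d → ℝ | ∀ j ∉ J, x j ≤ 1 * ε}) := by
        ext x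
        simp only [hB, Set.mem_setOf_eq, Set.mem_inter_iff]
      rw [he]; exact h1.inter (h2.inter h3)
    have hBcl : closure B ⊆ {x | 1 ≤ N x} :=
      closure_minimal (fun x hx => hx.1.le) (isClosed_le continuous_const hNc)
    have h0B : (0 : Fin d → ℝ) ∉ closure B := by
      intro h
      have := hBcl h
      simp only [Set.mem_setOf_eq, isNorm_zero hN] at this
      linarith
    have hfront : μ (frontier B) = 0 := by
      set Cset : Set (Fin d → ℝ) := {y | 1 ≤ N y} ∩
        ⋂ j, (if j ∈ J then {y : Fin d → ℝ | 1 * ε ≤ y j} else {y | y j ≤ 1 * ε}) with hCset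
      set Uset : Set (Fin d → ℝ) := {y | 1 < N y} ∩
        ⋂ j, (if j ∈ J then {y : Fin d → ℝ | 1 * ε < y j} else {y | y j < 1 * ε}) with hUset
      have hBC : B ⊆ Cset := by
        intro y hy
        refine ⟨hy.1.le, Set.mem_iInter.2 fun j => ?_⟩
        by_cases hj : j ∈ J
        · simp only [if_pos hj]; exact (hy.2.1 j hj).le
        · simp only [if_neg hj]; exact hy.2.2 j hj
      have hCclosed : IsClosed Cset := by
        refine (isClosed_le continuous_const hNc).inter (isClosed_iInter fun j => ?_)
        by_cases hj : j ∈ J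
        · simp only [if_pos hj]; exact isClosed_le continuous_const (continuous_apply j)
        · simp only [if_neg hj]; exact isClosed_le (continuous_apply j) continuous_const
      have hUopen : IsOpen Uset := by
        refine (isOpen_lt continuous_const hNc).inter (isOpen_iInter_of_finite fun j => ?_)
        by_cases hj : j ∈ J
        · simp only [if_pos hj]; exact isOpen_lt continuous_const (continuous_apply j)
        · simp only [if_neg hj]; exact isOpen_lt (continuous_apply j) continuous_const
      have hUB : Uset ⊆ B := by
        intro y hy
        refine ⟨hy.1, fun j hj => ?_, fun j hj => ?_⟩
        · have := Set.mem_iInter.1 hy.2 j; simpa [if_pos hj] using this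
        · have := Set.mem_iInter.1 hy.2 j
          rw [if_neg hj] at this
          exact this.le
      have hsub : frontier B ⊆ {x | N x = 1} ∪ ⋃ j, {x : Fin d → ℝ | x j = 1 * ε} := by
        intro x hx
        have hxC : x ∈ Cset := closure_minimal hBC hCclosed hx.1
        have hxU : x ∉ Uset := fun h => hx.2 (interior_maximal hUB hUopen h)
        by_cases hNx : N x = 1
        · exact Or.inl hNx
        · have hlt : 1 < N x := lt_of_le_of_ne hxC.1 (Ne.symm hNx)
          have hx2 : x ∉ ⋂ j, (if j ∈ J then {y : Fin d → ℝ | 1 * ε < y j} else {y | y j < 1 * ε}) :=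
            fun h => hxU ⟨hlt, h⟩
          simp only [Set.mem_iInter, not_forall] at hx2
          obtain ⟨j, hj⟩ := hx2
          refine Or.inr (Set.mem_iUnion.2 ⟨j, ?_⟩)
          have hxCj := Set.mem_iInter.1 hxC.2 j
          by_cases hjJ : j ∈ J
          · rw [if_pos hjJ] at hj hxCj
            simp only [Set.mem_setOf_eq, not_lt] at hj hxCj ⊢
            linarith
          · rw [if_neg hjJ] at hj hxCj
            simp only [Set.mem_setOf_eq, not_lt] at hj hxCj ⊢
            linarith
      refine measure_mono_null hsub (measure_union_null ?_ (measure_iUnion_null fun j => ?_))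
      · exact level_null hμ N hNc hNhom one_pos
      · exact level_null hμ (fun x => x j) (continuous_apply j)
          (fun c hc x => by simp [smul_eq_mul]) hεpos
    have hμB : μ B = μ (thickRect N J ε 1) := by
      apply le_antisymm
      · have hsplit : B ⊆ thickRect N J ε 1 ∪ {x | ¬ ((∀ j, 0 ≤ x j) ∧ x ≠ 0)} := by
          intro x hx
          by_cases hpos : ∀ j, 0 ≤ x j
          · exact Or.inl ⟨hpos, hx.1, hx.2.1, hx.2.2⟩
          · exact Or.inr (fun h => hpos h.1)
        calc μ B ≤ μ (thickRect N J ε 1 ∪ {x | ¬ ((∀ j, 0 ≤ x j) ∧ x ≠ 0)}) :=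
              measure_mono hsplit
          _ ≤ μ (thickRect N J ε 1) + μ {x | ¬ ((∀ j, 0 ≤ x j) ∧ x ≠ 0)} := measure_union_le _ _
          _ = μ (thickRect N J ε 1) := by rw [hμ.concentrated, add_zero]
      · exact measure_mono fun x hx => ⟨hx.2.1, hx.2.2.1, hx.2.2.2⟩
    have hT := hRV B hBmeas h0B hfront
    rw [← hμB]
    refine hT.congr' ?_
    filter_upwards [eventually_ge_atTop 1] with n hn
    have hn0 : (0:ℝ) < n := by exact_mod_cast Nat.lt_of_lt_of_le Nat.zero_lt_one hn
    have hset : {ω | (fun j => X ω j / (n:ℝ)) ∈ B} = {ω | X ω ∈ thickRect N J ε n} := by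
      ext ω
      have hfun : (fun j => X ω j / (n:ℝ)) = ((n:ℝ)⁻¹ • X ω) := by
        funext j; simp [div_eq_inv_mul]
      have hNval : N (fun j => X ω j / (n:ℝ)) = (n:ℝ)⁻¹ * N (X ω) := by
        rw [hfun, hNhom _ (inv_pos.2 hn0)]
      have hcanc : (n:ℝ) * ((n:ℝ)⁻¹ * N (X ω)) = N (X ω) := by field_simp
      simp only [hB, thickRect, Set.mem_setOf_eq]
      constructor
      · rintro ⟨h1, h2, h3⟩
        rw [hNval] at h1
        refine ⟨hXpos ω, by nlinarith, fun j hj => ?_, fun j hj => ?_⟩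
        · have := h2 j hj
          rw [one_mul, lt_div_iff₀ hn0] at this
          linarith [this]
        · have := h3 j hj
          rw [one_mul, div_le_iff₀ hn0] at this
          linarith [this]
      · rintro ⟨h0, h1, h2, h3⟩
        rw [hNval]
        refine ⟨by nlinarith, fun j hj => ?_, fun j hj => ?_⟩
        · rw [one_mul, lt_div_iff₀ hn0]
          have := h2 j hj; linarith
        · rw [one_mul, div_le_iff₀ hn0]
          have := h3 j hj; linarith
    rw [hset]
  · -- PART 2
    obtain ⟨j₀, hj₀⟩ := hJ
    set T : Set (Fin d → ℝ) :=
      {x | (∀ j, 0 ≤ x j) ∧ 1 < N x ∧ (∀ j ∈ J, 0 < x j) ∧ ∀ j ∉ J, x j = 0} with hT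
    have hTeq : {x ∈ EJ J | 1 < N x} = T := by
      ext x
      simp only [EJ, Set.mem_setOf_eq, Set.mem_sep_iff, hT]
      constructor
      · rintro ⟨⟨hpos, hne, hiff⟩, hNx⟩
        exact ⟨hpos, hNx, fun j hj => (hiff j).2 hj,
          fun j hj => le_antisymm (not_lt.1 (fun h => hj ((hiff j).1 h))) (hpos j)⟩
      · rintro ⟨hpos, hNx, hJpos, hJ0⟩
        refine ⟨⟨hpos, ?_, fun j =>
          ⟨fun h => by_contra fun hj => absurd (hJ0 j hj) (ne_of_gt h), hJpos j⟩⟩, hNx⟩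
        intro h0
        have hx0 := hJpos j₀ hj₀
        rw [h0] at hx0
        simp at hx0
    set L : ℝ → Set (Fin d → ℝ) := fun e => T ∩ {x | ∀ j ∈ J, e < x j} with hL
    set W : ℝ → Set (Fin d → ℝ) := fun e =>
      {x | (∀ j, 0 ≤ x j) ∧ 1 < N x ∧ ∃ j ∉ J, 0 < x j ∧ x j ≤ e} with hW
    have hLanti : ∀ {e e' : ℝ}, e ≤ e' → L e' ⊆ L e :=
      fun h x hx => ⟨hx.1, fun j hj => lt_of_le_of_lt h (hx.2 j hj)⟩
    have hWmono : ∀ {e e' : ℝ}, e ≤ e' → W e ⊆ W e' := by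
      intro e e' h x hx
      obtain ⟨h1, h2, j, hj, h3, h4⟩ := hx
      exact ⟨h1, h2, j, hj, h3, h4.trans h⟩
    have hLsub : ∀ {e : ℝ}, 0 < e → L e ⊆ thickRect N J e 1 := by
      intro e he x hx
      obtain ⟨⟨hpos, hNx, _, h0⟩, hgt⟩ := hx
      refine ⟨hpos, hNx, fun j hj => ?_, fun j hj => ?_⟩
      · rw [one_mul]; exact hgt j hj
      · rw [one_mul, h0 j hj]; exact he.le
    have hRsub : ∀ {e : ℝ}, 0 < e → thickRect N J e 1 ⊆ T ∪ W e := by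
      intro e he x hx
      obtain ⟨hpos, hNx, hJc, hnJc⟩ := hx
      by_cases hall : ∀ j ∉ J, x j = 0
      · left
        refine ⟨hpos, hNx, fun j hj => ?_, hall⟩
        have := hJc j hj; rw [one_mul] at this; linarith
      · right
        push_neg at hall
        obtain ⟨j, hj, hne⟩ := hall
        refine ⟨hpos, hNx, j, hj, lt_of_le_of_ne (hpos j) (Ne.symm hne), ?_⟩
        have := hnJc j hj; rw [one_mul] at this; exact this
    have hposmeas : MeasurableSet {x : Fin d → ℝ | ∀ j, 0 ≤ x j} := by
      have he : {x : Fin d → ℝ | ∀ j, 0 ≤ x j} = ⋂ j, {x : Fin d → ℝ | 0 ≤ x j} := by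
        ext x; simp [Set.mem_iInter]
      rw [he]
      exact MeasurableSet.iInter fun j =>
        measurableSet_le measurable_const (measurable_pi_apply j)
    have hWmeas : ∀ e : ℝ, MeasurableSet (W e) := by
      intro e
      have he : W e = ({x : Fin d → ℝ | ∀ j, 0 ≤ x j} ∩ {x | 1 < N x}) ∩
          ⋃ j, ⋃ (_ : j ∉ J), ({x : Fin d → ℝ | 0 < x j} ∩ {x | x j ≤ e}) := by
        ext x
        simp only [hW, Set.mem_setOf_eq, Set.mem_inter_iff, Set.mem_iUnion]
        tauto
      rw [he]
      exact (hposmeas.inter (measurableSet_lt measurable_const hNmeas)).inter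
        (MeasurableSet.iUnion fun j => MeasurableSet.iUnion fun _ =>
          (measurableSet_lt measurable_const (measurable_pi_apply j)).inter
            (measurableSet_le (measurable_pi_apply j) measurable_const))
    have hfin1 := finite_gt hμ hN one_pos
    have hTfin : μ T ≠ ⊤ :=
      ((measure_mono (fun x hx => hx.2.1 : T ⊆ {x | 1 < N x})).trans_lt hfin1).ne
    have hWfin : ∀ e, μ (W e) ≠ ⊤ := fun e =>
      ((measure_mono (fun x hx => hx.2.1 : W e ⊆ {x | 1 < N x})).trans_lt hfin1).ne
    have hRfin : ∀ e : ℝ, μ (thickRect N J e 1) ≠ ⊤ := fun e =>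
      ((measure_mono (fun x hx => hx.2.1 : thickRect N J e 1 ⊆ {x | 1 < N x})).trans_lt
        hfin1).ne
    have hinvle : ∀ {k l : ℕ}, k ≤ l → ((l:ℝ)+1)⁻¹ ≤ ((k:ℝ)+1)⁻¹ := by
      intro k l hkl
      have hc : ((k:ℝ)+1) ≤ ((l:ℝ)+1) := by
        have : (k:ℝ) ≤ l := Nat.cast_le.2 hkl
        linarith
      gcongr
    have hLlim : Tendsto (fun k : ℕ => μ (L (((k:ℝ)+1)⁻¹))) atTop (nhds (μ T)) := by
      have hmono : Monotone (fun k : ℕ => L (((k:ℝ)+1)⁻¹)) := fun k l hkl =>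
        hLanti (hinvle hkl)
      have hU : (⋃ k : ℕ, L (((k:ℝ)+1)⁻¹)) = T := by
        apply Set.Subset.antisymm
        · exact Set.iUnion_subset fun k x hx => hx.1
        · intro x hx
          set m := J.inf' ⟨j₀, hj₀⟩ x with hm
          have hmpos : 0 < m := by
            obtain ⟨j, hjJ, hje⟩ := Finset.exists_mem_eq_inf' ⟨j₀, hj₀⟩ x
            rw [hm, hje]
            exact hx.2.2.1 j hjJ
          obtain ⟨k, hk⟩ := exists_nat_gt m⁻¹
          have hkinv : ((k:ℝ)+1)⁻¹ < m :=
            (inv_lt_comm₀ (by positivity) hmpos).2 (lt_trans hk (lt_add_one _))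
          exact Set.mem_iUnion.2 ⟨k, hx, fun j hj =>
            lt_of_lt_of_le hkinv (Finset.inf'_le x hj)⟩
      have h := tendsto_measure_iUnion_atTop (μ := μ) hmono
      rw [hU] at h
      exact h
    have hWlim : Tendsto (fun k : ℕ => μ (W (((k:ℝ)+1)⁻¹))) atTop (nhds 0) := by
      have hanti : Antitone (fun k : ℕ => W (((k:ℝ)+1)⁻¹)) := fun k l hkl =>
        hWmono (hinvle hkl)
      have hI : (⋂ k : ℕ, W (((k:ℝ)+1)⁻¹)) = ∅ := by
        rw [Set.eq_empty_iff_forall_notMem]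
        intro x hx
        have hx0 := Set.mem_iInter.1 hx 0
        set S := Finset.univ.filter (fun j => j ∉ J ∧ 0 < x j) with hS
        have hSne : S.Nonempty := by
          obtain ⟨_, _, j, hj, hpos, _⟩ := hx0
          exact ⟨j, by simp [hS, hj, hpos]⟩
        set m := S.inf' hSne x with hm
        have hmpos : 0 < m := by
          obtain ⟨j, hjS, hje⟩ := Finset.exists_mem_eq_inf' hSne x
          rw [hm, hje]
          exact ((Finset.mem_filter.1 hjS).2).2
        obtain ⟨k, hk⟩ := exists_nat_gt m⁻¹
        have hkinv : ((k:ℝ)+1)⁻¹ < m :=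
          (inv_lt_comm₀ (by positivity) hmpos).2 (lt_trans hk (lt_add_one _))
        obtain ⟨_, _, j, hj, hjpos, hjle⟩ := Set.mem_iInter.1 hx k
        have hjS : j ∈ S := by simp [hS, hj, hjpos]
        have hmle := Finset.inf'_le x hjS
        rw [← hm] at hmle
        linarith
      have h := tendsto_measure_iInter_atTop (μ := μ)
        (fun k => (hWmeas _).nullMeasurableSet) hanti ⟨0, hWfin _⟩
      rw [hI, measure_empty] at h
      exact h
    have hLlim' : Tendsto (fun k : ℕ => (μ (L (((k:ℝ)+1)⁻¹))).toReal) atTop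
        (nhds (μ T).toReal) := (ENNReal.tendsto_toReal hTfin).comp hLlim
    have hWlim' : Tendsto (fun k : ℕ => (μ (W (((k:ℝ)+1)⁻¹))).toReal) atTop (nhds 0) := by
      have h := (ENNReal.tendsto_toReal (by simp : (0:ENNReal) ≠ ⊤)).comp hWlim
      simpa [Function.comp_def] using h
    rw [hTeq, Metric.tendsto_nhdsWithin_nhds]
    intro δ hδ
    have e1 : ∀ᶠ k : ℕ in atTop, (μ T).toReal - δ/2 < (μ (L (((k:ℝ)+1)⁻¹))).toReal :=
      hLlim'.eventually (eventually_gt_nhds (by linarith))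
    have e2 : ∀ᶠ k : ℕ in atTop, (μ (W (((k:ℝ)+1)⁻¹))).toReal < δ/2 :=
      hWlim'.eventually (eventually_lt_nhds (by linarith))
    obtain ⟨k, h1, h2⟩ := (e1.and e2).exists
    refine ⟨((k:ℝ)+1)⁻¹, by positivity, ?_⟩
    intro e he hdist
    have he0 : (0:ℝ) < e := Set.mem_Ioi.1 he
    rw [Real.dist_eq, sub_zero, abs_of_pos he0] at hdist
    have hle : e ≤ ((k:ℝ)+1)⁻¹ := hdist.le
    have hlow : (μ (L (((k:ℝ)+1)⁻¹))).toReal ≤ (μ (thickRect N J e 1)).toReal :=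
      ENNReal.toReal_mono (hRfin e) (measure_mono ((hLanti hle).trans (hLsub he0)))
    have hup : (μ (thickRect N J e 1)).toReal
        ≤ (μ T).toReal + (μ (W (((k:ℝ)+1)⁻¹))).toReal := by
      have hmeasle : μ (thickRect N J e 1) ≤ μ T + μ (W (((k:ℝ)+1)⁻¹)) :=
        le_trans (measure_mono (hRsub he0)) (le_trans (measure_union_le _ _)
          (add_le_add_right (measure_mono (hWmono hle)) _))
      calc (μ (thickRect N J e 1)).toReal
          ≤ (μ T + μ (W (((k:ℝ)+1)⁻¹))).toReal :=
            ENNReal.toReal_mono (ENNReal.add_ne_top.2 ⟨hTfin, hWfin _⟩) hmeasle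
        _ = (μ T).toReal + (μ (W (((k:ℝ)+1)⁻¹))).toReal :=
            ENNReal.toReal_add hTfin (hWfin _)
    rw [Real.dist_eq, abs_lt]
    constructor <;> linarith
end

section
/- Let S be a random vector in [−∞,0]^d with max_j S_j = 0 almost surely, let E be a unit exponential random variable independent of S, and put Y = E + S coordinatewise. Let T be a random vector in [−∞,∞)^d with max_j T_j finite almost surely such that T − max_j T_j is equal in distribution to S. Let U be a random vector in [−∞,∞)^d with 0 < E[e^{U_j}] < ∞ for every j ∈ D and 0 < E[e^{max_j U_j}] < ∞, such that the law of T satisfies P[T ∈ B] = E[1{U ∈ B} e^{max_j U_j}]/E[e^{max_j U_j}] for all Borel B. Then for every nonempty J ⊆ D: P[Y_j > −∞ iff j ∈ J] = P[S_j > −∞ iff j ∈ J] = P[T_j > −∞ iff j ∈ J] = E[e^{max_{j∈J} U_j} 1{U_j > −∞ iff j ∈ J}] / E[e^{max_{j∈D} U_j}]. -/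
open MeasureTheory ProbabilityTheory
open scoped Classical

/-- `e^x` for `x ∈ [-∞,∞)`, with `e^{-∞} = 0`. -/
noncomputable def eexp (x : EReal) : ℝ := if x = ⊥ then 0 else Real.exp x.toReal

/-! The pattern of finite coordinates of a vector is unchanged by adding a real number to every
coordinate. This gives the first two equalities: `Y = E + S` with `E` real, and `S` has the law of
`T - max T` with `max T` a.s. real. The last one is the tilting formula for `T` on the pattern set,
on which the maximum of `U` is attained inside `J`. -/

section FinitePattern

variable {ι : Type*} (J : Finset ι)

def finitePattern : Set (ι → EReal) := {x | ∀ j, (x j ≠ ⊥ ↔ j ∈ J)}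

theorem measurableSet_finitePattern [Countable ι] : MeasurableSet (finitePattern J) := by
  unfold finitePattern
  measurability

theorem coe_add_mem_finitePattern_iff (r : ℝ) (x : ι → EReal) :
    (fun j => (r : EReal) + x j) ∈ finitePattern J ↔ x ∈ finitePattern J := by
  simp [finitePattern, EReal.add_eq_bot_iff]

theorem sub_const_mem_finitePattern_iff {m : EReal} (hm_bot : m ≠ ⊥) (hm_top : m ≠ ⊤)
    (x : ι → EReal) : (fun j => x j - m) ∈ finitePattern J ↔ x ∈ finitePattern J := by
  lift m to ℝ using ⟨hm_top, hm_bot⟩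
  simp [finitePattern, sub_eq_add_neg, ← EReal.coe_neg, EReal.add_eq_bot_iff]

theorem iSup_eq_biSup_of_mem_finitePattern {x : ι → EReal} (hx : x ∈ finitePattern J) :
    ⨆ j, x j = ⨆ j ∈ J, x j := by
  refine le_antisymm (iSup_le fun j => ?_) (iSup₂_le fun j _ => le_iSup x j)
  by_cases hj : j ∈ J
  · exact le_iSup₂_of_le (f := fun j (_ : j ∈ J) => x j) j hj le_rfl
  · simp [not_not.mp (mt (hx j).1 hj)]

end FinitePattern

theorem pattern_probabilities_eq_general {d : ℕ}
    {Ω : Type*} [MeasurableSpace Ω] (P : Measure Ω)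
    -- the spectral random vector S
    (S : Ω → Fin d → EReal) (hSmeas : Measurable S)
    -- a unit exponential random variable independent of S
    (Eexp : Ω → ℝ)
    -- Y = E + S coordinatewise
    (Y : Ω → Fin d → EReal) (hY : ∀ ω j, Y ω j = (Eexp ω : EReal) + S ω j)
    -- the T-generator
    (T : Ω → Fin d → EReal) (hTmeas : Measurable T)
    (hTtop : ∀ ω j, T ω j ≠ ⊤)
    (hTmax : ∀ᵐ ω ∂P, ⊥ < ⨆ j, T ω j)
    (hTS : Measure.map (fun ω => fun j => T ω j - ⨆ i, T ω i) P = Measure.map S P)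
    -- the U-generator
    (U : Ω → Fin d → EReal)
    (hTU : ∀ B : Set (Fin d → EReal), MeasurableSet B →
      (P {ω | T ω ∈ B}).toReal =
        (∫ ω, (if U ω ∈ B then eexp (⨆ j, U ω j) else 0) ∂P) /
          ∫ ω, eexp (⨆ j, U ω j) ∂P)
    -- a nonempty set of indices J
    (J : Finset (Fin d)) :
    P {ω | ∀ j, (Y ω j ≠ ⊥ ↔ j ∈ J)} = P {ω | ∀ j, (S ω j ≠ ⊥ ↔ j ∈ J)} ∧
    P {ω | ∀ j, (S ω j ≠ ⊥ ↔ j ∈ J)} = P {ω | ∀ j, (T ω j ≠ ⊥ ↔ j ∈ J)} ∧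
    (P {ω | ∀ j, (T ω j ≠ ⊥ ↔ j ∈ J)}).toReal =
      (∫ ω, (if ∀ j, (U ω j ≠ ⊥ ↔ j ∈ J) then eexp (⨆ j ∈ J, U ω j) else 0) ∂P) /
        ∫ ω, eexp (⨆ j, U ω j) ∂P := by
  have hpat := measurableSet_finitePattern J
  obtain rfl : Y = fun ω j => (Eexp ω : EReal) + S ω j := funext fun ω => funext (hY ω)
  have hYS : {ω | ∀ j, ((Eexp ω : EReal) + S ω j ≠ ⊥ ↔ j ∈ J)} = S ⁻¹' finitePattern J :=
    Set.ext fun ω => coe_add_mem_finitePattern_iff J (Eexp ω) (S ω)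
  have hST : P (S ⁻¹' finitePattern J) = P (T ⁻¹' finitePattern J) := by
    have hshift : Measurable fun ω => fun j => T ω j - ⨆ i, T ω i := by fun_prop
    rw [← Measure.map_apply hSmeas hpat, ← hTS, Measure.map_apply hshift hpat]
    refine measure_congr (Filter.eventuallyEq_set.2 ?_)
    filter_upwards [hTmax] with ω hω
    exact sub_const_mem_finitePattern_iff J hω.ne' (iSup_ne_top (hTtop ω)) (T ω)
  refine ⟨congrArg P hYS, hST, (hTU _ hpat).trans ?_⟩
  congr 1
  refine integral_congr_ae (.of_forall fun ω => ?_)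
  by_cases hU : U ω ∈ finitePattern J
  · simp only [if_pos hU, if_pos (show ∀ j, (U ω j ≠ ⊥ ↔ j ∈ J) from hU),
      iSup_eq_biSup_of_mem_finitePattern J hU]
  · simp only [if_neg hU, if_neg (show ¬∀ j, (U ω j ≠ ⊥ ↔ j ∈ J) from hU)]

/-- the probabilities of a given pattern `J` of finite coordinates agree for
`Y = E + S`, the spectral vector `S`, the `T`-generator, and are expressed through the
`U`-generator by an exponential tilting. -/
theorem pattern_probabilities_eq {d : ℕ} [NeZero d]
    {Ω : Type*} [MeasurableSpace Ω] (P : Measure Ω) [IsProbabilityMeasure P]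
    -- the spectral random vector S
    (S : Ω → Fin d → EReal) (hSmeas : Measurable S)
    (hSle : ∀ ω j, S ω j ≤ 0)
    (hSmax : ∀ᵐ ω ∂P, (⨆ j, S ω j) = 0)
    -- a unit exponential random variable independent of S
    (Eexp : Ω → ℝ) (hEmeas : Measurable Eexp)
    (hElaw : Measure.map Eexp P = expMeasure 1)
    (hindep : IndepFun Eexp S P)
    -- Y = E + S coordinatewise
    (Y : Ω → Fin d → EReal) (hY : ∀ ω j, Y ω j = (Eexp ω : EReal) + S ω j)
    -- the T-generator
    (T : Ω → Fin d → EReal) (hTmeas : Measurable T)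
    (hTtop : ∀ ω j, T ω j ≠ ⊤)
    (hTmax : ∀ᵐ ω ∂P, ⊥ < ⨆ j, T ω j)
    (hTS : Measure.map (fun ω => fun j => T ω j - ⨆ i, T ω i) P = Measure.map S P)
    -- the U-generator
    (U : Ω → Fin d → EReal) (hUmeas : Measurable U)
    (hUtop : ∀ ω j, U ω j ≠ ⊤)
    (hUj_pos : ∀ j, 0 < ∫ ω, eexp (U ω j) ∂P)
    (hUj_int : ∀ j, Integrable (fun ω => eexp (U ω j)) P)
    (hUmax_pos : 0 < ∫ ω, eexp (⨆ j, U ω j) ∂P)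
    (hUmax_int : Integrable (fun ω => eexp (⨆ j, U ω j)) P)
    (hTU : ∀ B : Set (Fin d → EReal), MeasurableSet B →
      (P {ω | T ω ∈ B}).toReal =
        (∫ ω, (if U ω ∈ B then eexp (⨆ j, U ω j) else 0) ∂P) /
          ∫ ω, eexp (⨆ j, U ω j) ∂P)
    -- a nonempty set of indices J
    (J : Finset (Fin d)) (hJ : J.Nonempty) :
    P {ω | ∀ j, (Y ω j ≠ ⊥ ↔ j ∈ J)} = P {ω | ∀ j, (S ω j ≠ ⊥ ↔ j ∈ J)} ∧
    P {ω | ∀ j, (S ω j ≠ ⊥ ↔ j ∈ J)} = P {ω | ∀ j, (T ω j ≠ ⊥ ↔ j ∈ J)} ∧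
    (P {ω | ∀ j, (T ω j ≠ ⊥ ↔ j ∈ J)}).toReal =
      (∫ ω, (if ∀ j, (U ω j ≠ ⊥ ↔ j ∈ J) then eexp (⨆ j ∈ J, U ω j) else 0) ∂P) /
        ∫ ω, eexp (⨆ j, U ω j) ∂P :=
  pattern_probabilities_eq_general P S hSmeas Eexp Y hY T hTmeas hTtop hTmax hTS U hTU J
end

section
/- For each k ∈ R let μ^{(k)} be a nonzero Borel measure on (0,∞)^{J_k}, homogeneous of degree −1 and finite on Borel sets whose closure does not contain the origin, and let ι_k : (0,∞)^{J_k} → E be the map sending y to the vector whose j-th coordinate is a_{jk} y_j for j ∈ J_k and 0 for j ∉ J_k. Define μ = Σ_{k∈R} (ι_k)_* μ^{(k)}. Then for every nonempty J ⊆ D, μ(E_J) > 0 if and only if J = J_k for some k ∈ R; that is, the set of extreme directions of μ is exactly {J_1,…,J_r}. -/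
open MeasureTheory

/-- A mixture coefficient matrix: entries in `[0,1]`, unit row sums, positive column sums. -/
structure MixCoeff (d r : ℕ) (A : Fin d → Fin r → ℝ) : Prop where
  mem_Icc : ∀ j k, A j k ∈ Set.Icc (0 : ℝ) 1
  row_sum : ∀ j, ∑ k, A j k = 1
  col_sum : ∀ k, 0 < ∑ j, A j k

/-- The `k`-th signature `J_k = {j : a_{jk} > 0}`. -/
noncomputable def sig {d r : ℕ} (A : Fin d → Fin r → ℝ) (k : Fin r) : Finset (Fin d) :=
  Finset.univ.filter (fun j => 0 < A j k)

/-- The map `ι_k : (0,∞)^{J_k} → E`, `y ↦ (a_{jk} y_j for j ∈ J_k, 0 otherwise)`. -/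
noncomputable def iotaA {d r : ℕ} (A : Fin d → Fin r → ℝ) (k : Fin r)
    (y : {j // j ∈ sig A k} → ℝ) : Fin d → ℝ :=
  fun j => if h : j ∈ sig A k then A j k * y ⟨j, h⟩ else 0

lemma mem_sig_iff {d r : ℕ} (A : Fin d → Fin r → ℝ) (k : Fin r) (j : Fin d) :
    j ∈ sig A k ↔ 0 < A j k := by simp [sig]

lemma iotaA_measurable {d r : ℕ} (A : Fin d → Fin r → ℝ) (k : Fin r) :
    Measurable (iotaA A k) := by
  apply measurable_pi_lambda
  intro j
  by_cases h : j ∈ sig A k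
  · simp only [iotaA, dif_pos h]
    exact (measurable_pi_apply _).const_mul _
  · simp only [iotaA, dif_neg h]
    exact measurable_const

lemma EJ_measurable {d : ℕ} (J : Finset (Fin d)) : MeasurableSet (EJ J) := by
  have : EJ J = (⋂ j, {x : Fin d → ℝ | 0 ≤ x j}) ∩ {(0 : Fin d → ℝ)}ᶜ ∩
      ⋂ j, {x : Fin d → ℝ | 0 < x j ↔ j ∈ J} := by
    ext x
    simp [EJ, Set.mem_iInter, and_assoc]
  rw [this]
  refine ((MeasurableSet.iInter fun j => ?_).inter
    (measurableSet_singleton 0).compl).inter (MeasurableSet.iInter fun j => ?_)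
  · exact measurableSet_le measurable_const (measurable_pi_apply j)
  · by_cases h : j ∈ J
    · simp only [h, iff_true]
      exact measurableSet_lt measurable_const (measurable_pi_apply j)
    · simp only [h, iff_false]
      exact (measurableSet_lt measurable_const (measurable_pi_apply j)).compl

lemma sig_nonempty {d r : ℕ} (A : Fin d → Fin r → ℝ) (hA : MixCoeff d r A) (k : Fin r) :
    (sig A k).Nonempty := by
  by_contra h
  rw [Finset.not_nonempty_iff_eq_empty] at h
  have : ∑ j, A j k ≤ 0 := by
    apply Finset.sum_nonpos
    intro j _
    by_contra hj
    push_neg at hj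
    have : j ∈ sig A k := by simp [sig, hj]
    simp [h] at this
  exact absurd (hA.col_sum k) (not_lt.mpr this)

lemma iotaA_mem_EJ {d r : ℕ} (A : Fin d → Fin r → ℝ) (hA : MixCoeff d r A) (k : Fin r)
    (y : {j // j ∈ sig A k} → ℝ) (hy : ∀ j, 0 < y j) :
    iotaA A k y ∈ EJ (sig A k) := by
  have hpos : ∀ j (h : j ∈ sig A k), 0 < iotaA A k y j := by
    intro j h
    simp only [iotaA, dif_pos h]
    exact mul_pos ((mem_sig_iff A k j).mp h) (hy _)
  refine ⟨?_, ?_, ?_⟩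
  · intro j
    by_cases h : j ∈ sig A k
    · exact (hpos j h).le
    · simp [iotaA, dif_neg h]
  · obtain ⟨j, hj⟩ := sig_nonempty A hA k
    intro h0
    have := hpos j hj
    rw [h0] at this
    exact lt_irrefl 0 this
  · intro j
    constructor
    · intro hj
      by_contra h
      simp [iotaA, dif_neg h] at hj
    · exact hpos j

/-- Proposition 4.5: the extreme directions of
`μ = Σ_k (ι_k)_* μ^{(k)}` are exactly the signatures `J_1,…,J_r`. -/
theorem mixture_extreme_directions {d r : ℕ} [NeZero d] [NeZero r]
    (A : Fin d → Fin r → ℝ) (hA : MixCoeff d r A)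
    (μk : (k : Fin r) → Measure ({j // j ∈ sig A k} → ℝ))
    (hconc : ∀ k, μk k {y | ¬ ∀ j, 0 < y j} = 0)
    (hnz : ∀ k, μk k ≠ 0)
    (hhom : ∀ k (c : ℝ), 0 < c → ∀ B : Set ({j // j ∈ sig A k} → ℝ), MeasurableSet B →
      μk k ((c • ·) '' B) = (ENNReal.ofReal c)⁻¹ * μk k B)
    (hfin : ∀ k (B : Set ({j // j ∈ sig A k} → ℝ)),
      (0 : {j // j ∈ sig A k} → ℝ) ∉ closure B → μk k B < ⊤)
    (J : Finset (Fin d)) (hJ : J.Nonempty) :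
    0 < (∑ k, Measure.map (iotaA A k) (μk k)) (EJ J) ↔ ∃ k, J = sig A k := by
  classical
  have hsum : (∑ k, Measure.map (iotaA A k) (μk k)) (EJ J)
      = ∑ k, (Measure.map (iotaA A k) (μk k)) (EJ J) := by
    simp [Measure.finset_sum_apply]
  have hmap : ∀ k, (Measure.map (iotaA A k) (μk k)) (EJ J)
      = μk k (iotaA A k ⁻¹' EJ J) := fun k =>
    Measure.map_apply (iotaA_measurable A k) (EJ_measurable J)
  rw [hsum]
  constructor
  · intro hpos
    have : ∃ k, (Measure.map (iotaA A k) (μk k)) (EJ J) ≠ 0 := by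
      by_contra h
      push_neg at h
      rw [Finset.sum_eq_zero (fun k _ => h k)] at hpos
      exact lt_irrefl 0 hpos
    obtain ⟨k, hk⟩ := this
    rw [hmap] at hk
    -- the preimage must intersect the positivity set
    have hne : (iotaA A k ⁻¹' EJ J ∩ {y | ∀ j, 0 < y j}).Nonempty := by
      by_contra h
      rw [Set.not_nonempty_iff_eq_empty] at h
      have hsub : iotaA A k ⁻¹' EJ J ⊆ {y | ¬ ∀ j, 0 < y j} := by
        intro y hy
        intro hy'
        exact Set.eq_empty_iff_forall_notMem.mp h y ⟨hy, hy'⟩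
      exact hk (le_antisymm (le_trans (measure_mono hsub) (hconc k).le) zero_le)
    obtain ⟨y, hy1, hy2⟩ := hne
    refine ⟨k, ?_⟩
    have hyEJ : iotaA A k y ∈ EJ (sig A k) := iotaA_mem_EJ A hA k y hy2
    ext j
    rw [← hy1.2.2 j, hyEJ.2.2 j]
  · rintro ⟨k, rfl⟩
    have hle : μk k {y | ∀ j, 0 < y j} ≤ (Measure.map (iotaA A k) (μk k)) (EJ (sig A k)) := by
      rw [hmap]
      exact measure_mono (fun y hy => iotaA_mem_EJ A hA k y hy)
    have hposk : 0 < μk k {y | ∀ j, 0 < y j} := by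
      rcases (show (0:ENNReal) ≤ μk k {y | ∀ j, 0 < y j} from zero_le).lt_or_eq with h | h
      · exact h
      · exfalso
        apply hnz k
        ext B hB
        have : μk k Set.univ = 0 := by
          have hu : (Set.univ : Set ({j // j ∈ sig A k} → ℝ))
              = {y | ∀ j, 0 < y j} ∪ {y | ∀ j, 0 < y j}ᶜ := (Set.union_compl_self _).symm
          have hc : ({y : {j // j ∈ sig A k} → ℝ | ∀ j, 0 < y j}ᶜ)
              = {y | ¬ ∀ j, 0 < y j} := (Set.compl_setOf _)
          refine le_antisymm ?_ zero_le
          calc μk k Set.univ ≤ μk k {y | ∀ j, 0 < y j} + μk k ({y | ∀ j, 0 < y j}ᶜ) := by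
                rw [hu]; exact measure_union_le _ _
            _ = 0 := by rw [← h, hc, hconc k]; simp
        simp [le_antisymm (le_trans (measure_mono (Set.subset_univ B)) this.le) zero_le]
    calc (0 : ENNReal) < μk k {y | ∀ j, 0 < y j} := hposk
      _ ≤ (Measure.map (iotaA A k) (μk k)) (EJ (sig A k)) := hle
      _ ≤ ∑ k', (Measure.map (iotaA A k') (μk k')) (EJ (sig A k)) :=
        Finset.single_le_sum (f := fun k' => (Measure.map (iotaA A k') (μk k')) (EJ (sig A k))) (fun _ _ => zero_le) (Finset.mem_univ k)
end

section
/- Let U be the mixture generator with coefficient matrix A, generators U^{(1)},…,U^{(r)} and mass vector m ∈ (0,1)^r (Σ_k m_k = 1). Then, with the convention e^{−∞} = 0: E[e^{U_j}] = 1 for every j ∈ D, and for every y ∈ [0,∞)^d, E[max_{j∈D} y_j e^{U_j}] = Σ_{k∈R} ℓ^{(k)}((a_{jk} y_j)_{j∈J_k}). In particular, U is a U-generator of the multivariate generalized Pareto distribution whose stable tail dependence function is ℓ(y) = Σ_k ℓ^{(k)}((a_{jk} y_j)_{j∈J_k}). -/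
open MeasureTheory ProbabilityTheory

/-- The embedding `ι_{J_k} : ℝ^{J_k} → [-∞,∞)^d` setting coordinates outside `J_k`
to `-∞`. -/
noncomputable def embA {d r : ℕ} (A : Fin d → Fin r → ℝ) (k : Fin r)
    (x : {j // j ∈ sig A k} → ℝ) : Fin d → EReal :=
  fun j => if h : j ∈ sig A k then ((x ⟨j, h⟩ : ℝ) : EReal) else ⊥

/-!
Integrals against the law of `U` split, by the mixture formula, into the `m_k`-weighted
integrals against the components `ι_{J_k}(U^{(k)} + ln(a_{·k}/m_k))`. On the `k`-th component
`e^{U_j}` equals `(a_{jk}/m_k) e^{U^{(k)}_j}` for `j ∈ J_k` and vanishes off `J_k`, so the weight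
`m_k` cancels: the `j`-th moment becomes `Σ_k a_{jk} = 1`, and the maximum over `D` reduces to
the maximum over `J_k` of `a_{jk} y_j e^{U^{(k)}_j}`.
-/

section

variable {α : Type*} [MeasurableSpace α] {μ : Measure α}

theorem Real.ciSup_dite_zero {ι : Type*} [Finite ι] {p : ι → Prop} [DecidablePred p]
    {G : Subtype p → ℝ} (hG : ∀ i, 0 ≤ G i) :
    (⨆ i, if h : p i then G ⟨i, h⟩ else 0) = ⨆ i : Subtype p, G i := by
  rw [← cbiSup_eq_ciSup_subtype (f := fun i h => G ⟨i, h⟩) (Set.finite_range _).bddAbove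
    (by simpa using Real.iSup_nonneg hG)]
  congr! with i
  by_cases h : p i <;> simp [h]

theorem integrable_ciSup {ι : Type*} [Finite ι] {f : ι → α → ℝ}
    (hf : ∀ i, Integrable (f i) μ) : Integrable (fun a => ⨆ i, f i a) μ := by
  cases isEmpty_or_nonempty ι
  · simp [Real.iSup_of_isEmpty]
  · have := Fintype.ofFinite ι
    have hsup : (fun a => ⨆ i, f i a) = Finset.univ.sup' Finset.univ_nonempty f := by
      funext a
      rw [Finset.sup'_apply, Finset.sup'_univ_eq_ciSup]
    rw [hsup]
    exact Finset.sup'_induction (p := fun g => Integrable g μ) _ _ (fun _ hf _ hg => hf.sup hg)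
      fun i _ => hf i

theorem integral_comp_of_map_eq_sum_smul {ι Ω Ω' E : Type*} [Fintype ι] [MeasurableSpace Ω]
    [MeasurableSpace Ω'] [MeasurableSpace E] {P : Measure Ω} {P' : Measure Ω'}
    {U : Ω' → E} {X : ι → Ω → E} {m : ι → ℝ} {g : E → ℝ}
    (hU : AEMeasurable U P') (hX : ∀ k, AEMeasurable (X k) P) (hm : ∀ k, 0 ≤ m k)
    (hlaw : P'.map U = ∑ k, ENNReal.ofReal (m k) • P.map (X k)) (hg : Measurable g)
    (hint : ∀ k, Integrable (fun ω => g (X k ω)) P) :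
    ∫ ω', g (U ω') ∂P' = ∑ k, m k * ∫ ω, g (X k ω) ∂P := by
  have hint_map k : Integrable g (P.map (X k)) :=
    (integrable_map_measure hg.aestronglyMeasurable (hX k)).mpr (hint k)
  rw [← integral_map hU hg.aestronglyMeasurable, hlaw,
    integral_finsetSum_measure fun k _ => (hint_map k).smul_measure ENNReal.ofReal_ne_top]
  refine Finset.sum_congr rfl fun k _ => ?_
  rw [integral_smul_measure, ENNReal.toReal_ofReal (hm k), smul_eq_mul,
    integral_map (hX k) hg.aestronglyMeasurable]

end

theorem measurable_eexp : Measurable eexp :=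
  Measurable.ite measurableSet_eq measurable_const
    (Real.measurable_exp.comp measurable_ereal_toReal)

noncomputable def mixComponent {d r : ℕ} {Ω : Type*} (A : Fin d → Fin r → ℝ) (m : Fin r → ℝ)
    (Uk : (k : Fin r) → Ω → ({j // j ∈ sig A k} → ℝ)) (k : Fin r) (ω : Ω) : Fin d → EReal :=
  embA A k (fun j => Uk k ω j + Real.log (A j.1 k / m k))

section Mixture

variable {d r : ℕ} {A : Fin d → Fin r → ℝ}

theorem mem_sig {j : Fin d} {k : Fin r} : j ∈ sig A k ↔ 0 < A j k := by
  simp [sig]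

theorem MixCoeff.eq_zero_of_notMem_sig (hA : MixCoeff d r A) {j : Fin d} {k : Fin r}
    (hj : j ∉ sig A k) : A j k = 0 :=
  le_antisymm (not_lt.mp (mem_sig.not.mp hj)) (hA.mem_Icc j k).1

theorem measurable_embA (k : Fin r) : Measurable (embA A k) := by
  refine measurable_pi_lambda _ fun j => ?_
  by_cases hj : j ∈ sig A k
  · simp only [embA, dif_pos hj]
    exact measurable_coe_real_ereal.comp (measurable_pi_apply _)
  · simp [embA, hj]

theorem eexp_embA (k : Fin r) (x : {j // j ∈ sig A k} → ℝ) (j : Fin d) :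
    eexp (embA A k x j) = if h : j ∈ sig A k then Real.exp (x ⟨j, h⟩) else 0 := by
  by_cases hj : j ∈ sig A k <;> simp [eexp, embA, hj]

theorem eexp_embA_add_log {k : Fin r} {c : ℝ} (hc : 0 < c) (x : {j // j ∈ sig A k} → ℝ)
    (j : Fin d) :
    eexp (embA A k (fun i => x i + Real.log (A i.1 k / c)) j) =
      A j k / c * eexp (embA A k x j) := by
  by_cases hj : j ∈ sig A k
  · simp only [eexp_embA, dif_pos hj, Real.exp_add,
      Real.exp_log (div_pos (mem_sig.mp hj) hc), mul_comm]
  · simp [eexp_embA, hj]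

theorem ciSup_mul_eexp_embA (k : Fin r) {w : Fin d → ℝ} (hw : ∀ j, 0 ≤ w j)
    (x : {j // j ∈ sig A k} → ℝ) :
    ⨆ j, w j * eexp (embA A k x j) = ⨆ j : {j // j ∈ sig A k}, w j * Real.exp (x j) := by
  simp only [eexp_embA, mul_dite, mul_zero]
  exact Real.ciSup_dite_zero (G := fun j => w j * Real.exp (x j))
    fun j => mul_nonneg (hw j) (Real.exp_pos _).le

variable {Ω : Type*} {Uk : (k : Fin r) → Ω → ({j // j ∈ sig A k} → ℝ)} {m : Fin r → ℝ}

theorem ciSup_mul_eexp_mixComponent (hA : MixCoeff d r A) {k : Fin r} (hm : 0 < m k)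
    {y : Fin d → ℝ} (hy : ∀ j, 0 ≤ y j) (ω : Ω) :
    ⨆ j, y j * eexp (mixComponent A m Uk k ω j) =
      (m k)⁻¹ * ⨆ j : {j // j ∈ sig A k}, A j.1 k * y j.1 * Real.exp (Uk k ω j) := by
  calc ⨆ j, y j * eexp (mixComponent A m Uk k ω j)
      = ⨆ j, (m k)⁻¹ * (A j k * y j * eexp (embA A k (Uk k ω) j)) := by
        refine iSup_congr fun j => ?_
        rw [mixComponent, eexp_embA_add_log hm]
        ring
    _ = (m k)⁻¹ * ⨆ j, A j k * y j * eexp (embA A k (Uk k ω) j) :=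
        (Real.mul_iSup_of_nonneg (inv_nonneg.mpr hm.le) _).symm
    _ = _ := by rw [ciSup_mul_eexp_embA k fun j => mul_nonneg (hA.mem_Icc j k).1 (hy j)]

variable [MeasurableSpace Ω] {P : Measure Ω}

theorem integrable_eexp_embA {k : Fin r} {X : Ω → {j // j ∈ sig A k} → ℝ}
    (hX : ∀ j, Integrable (fun ω => Real.exp (X ω j)) P) (j : Fin d) :
    Integrable (fun ω => eexp (embA A k (X ω) j)) P := by
  by_cases hj : j ∈ sig A k <;> simp [eexp_embA, hj, hX]

theorem mul_integral_eexp_embA (hA : MixCoeff d r A) {k : Fin r}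
    {X : Ω → {j // j ∈ sig A k} → ℝ} (hX : ∀ j, ∫ ω, Real.exp (X ω j) ∂P = 1) (j : Fin d) :
    A j k * ∫ ω, eexp (embA A k (X ω) j) ∂P = A j k := by
  by_cases hj : j ∈ sig A k
  · simp [eexp_embA, hj, hX]
  · simp [hA.eq_zero_of_notMem_sig hj]

theorem measurable_mixComponent {k : Fin r} (hUk : Measurable (Uk k)) :
    Measurable (mixComponent A m Uk k) :=
  (measurable_embA k).comp <| measurable_pi_lambda _ fun j =>
    ((measurable_pi_apply j).comp hUk).add_const _

theorem mul_integral_eexp_mixComponent (hA : MixCoeff d r A) {k : Fin r} (hm : 0 < m k)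
    (hUk : ∀ j, ∫ ω, Real.exp (Uk k ω j) ∂P = 1) (j : Fin d) :
    m k * ∫ ω, eexp (mixComponent A m Uk k ω j) ∂P = A j k := by
  simp_rw [mixComponent, eexp_embA_add_log hm, integral_const_mul, ← mul_assoc,
    mul_div_cancel₀ _ hm.ne']
  exact mul_integral_eexp_embA hA hUk j

end Mixture

theorem mixture_generator_is_U_generator_general {d r : ℕ}
    (A : Fin d → Fin r → ℝ) (hA : MixCoeff d r A)
    {Ω : Type*} [MeasurableSpace Ω] (P : Measure Ω)
    (Uk : (k : Fin r) → Ω → ({j // j ∈ sig A k} → ℝ))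
    (hUkmeas : ∀ k, Measurable (Uk k))
    (hUknorm : ∀ k (j : {j // j ∈ sig A k}), ∫ ω, Real.exp (Uk k ω j) ∂P = 1)
    (m : Fin r → ℝ) (hm : ∀ k, m k ∈ Set.Ioo (0 : ℝ) 1)
    {Ω' : Type*} [MeasurableSpace Ω'] (P' : Measure Ω')
    (U : Ω' → Fin d → EReal) (hUmeas : Measurable U)
    (hUlaw : Measure.map U P' =
      ∑ k, (ENNReal.ofReal (m k)) •
        Measure.map (fun ω => embA A k (fun j => Uk k ω j + Real.log (A j.1 k / m k))) P) :
    (∀ j : Fin d, ∫ ω', eexp (U ω' j) ∂P' = 1) ∧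
    ∀ y : Fin d → ℝ, (∀ j, 0 ≤ y j) →
      ∫ ω', (⨆ j, y j * eexp (U ω' j)) ∂P' =
        ∑ k, ∫ ω, (⨆ j : {j // j ∈ sig A k}, (A j.1 k * y j.1) * Real.exp (Uk k ω j)) ∂P := by
  have hm_pos k : 0 < m k := (hm k).1
  have hexp k j : Integrable (fun ω => Real.exp (Uk k ω j)) P :=
    .of_integral_ne_zero (by simp [hUknorm])
  have mixture {g : (Fin d → EReal) → ℝ} (hg : Measurable g)
      (hint : ∀ k, Integrable (fun ω => g (mixComponent A m Uk k ω)) P) :=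
    integral_comp_of_map_eq_sum_smul hUmeas.aemeasurable
      (fun k => (measurable_mixComponent (hUkmeas k)).aemeasurable) (fun k => (hm_pos k).le)
      hUlaw hg hint
  refine ⟨fun j => ?_, fun y hy => ?_⟩
  · have hint k : Integrable (fun ω => eexp (mixComponent A m Uk k ω j)) P := by
      simpa only [mixComponent, eexp_embA_add_log (hm_pos k)] using
        (integrable_eexp_embA (hexp k) j).const_mul _
    rw [mixture (g := fun x => eexp (x j)) (measurable_eexp.comp (measurable_pi_apply j)) hint,
      ← hA.row_sum j]
    exact Finset.sum_congr rfl fun k _ =>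
      mul_integral_eexp_mixComponent hA (hm_pos k) (hUknorm k) j
  · have hg : Measurable fun x : Fin d → EReal => ⨆ j, y j * eexp (x j) :=
      .iSup fun j => measurable_const.mul (measurable_eexp.comp (measurable_pi_apply j))
    have hint k : Integrable (fun ω => ⨆ j, y j * eexp (mixComponent A m Uk k ω j)) P := by
      simpa only [ciSup_mul_eexp_mixComponent hA (hm_pos k) hy] using
        (integrable_ciSup fun j => (hexp k j).const_mul _).const_mul _
    simp_rw [mixture hg hint, ciSup_mul_eexp_mixComponent hA (hm_pos _) hy, integral_const_mul,
      mul_inv_cancel_left₀ (hm_pos _).ne']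

/-- Proposition 4.7: the mixture generator `U` satisfies `E[e^{U_j}] = 1` for
all `j` and `E[max_j y_j e^{U_j}] = Σ_k ℓ^{(k)}((a_{jk} y_j)_{j ∈ J_k})`, i.e. it is a
`U`-generator of the mgp distribution with stdf `ℓ`. -/
theorem mixture_generator_is_U_generator {d r : ℕ} [NeZero d] [NeZero r]
    (A : Fin d → Fin r → ℝ) (hA : MixCoeff d r A)
    {Ω : Type*} [MeasurableSpace Ω] (P : Measure Ω) [IsProbabilityMeasure P]
    (Uk : (k : Fin r) → Ω → ({j // j ∈ sig A k} → ℝ))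
    (hUkmeas : ∀ k, Measurable (Uk k))
    (hUknorm : ∀ k (j : {j // j ∈ sig A k}), ∫ ω, Real.exp (Uk k ω j) ∂P = 1)
    (m : Fin r → ℝ) (hm : ∀ k, m k ∈ Set.Ioo (0 : ℝ) 1) (hmsum : ∑ k, m k = 1)
    {Ω' : Type*} [MeasurableSpace Ω'] (P' : Measure Ω') [IsProbabilityMeasure P']
    (U : Ω' → Fin d → EReal) (hUmeas : Measurable U)
    (hUlaw : Measure.map U P' =
      ∑ k, (ENNReal.ofReal (m k)) •
        Measure.map (fun ω => embA A k (fun j => Uk k ω j + Real.log (A j.1 k / m k))) P) :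
    (∀ j : Fin d, ∫ ω', eexp (U ω' j) ∂P' = 1) ∧
    ∀ y : Fin d → ℝ, (∀ j, 0 ≤ y j) →
      ∫ ω', (⨆ j, y j * eexp (U ω' j)) ∂P' =
        ∑ k, ∫ ω, (⨆ j : {j // j ∈ sig A k}, (A j.1 k * y j.1) * Real.exp (Uk k ω j)) ∂P :=
  mixture_generator_is_U_generator_general A hA P Uk hUkmeas hUknorm m hm P' U hUmeas hUlaw
end
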